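/- arXiv:1206.3951 — 9 statements merged into one kernel-verified Lean document; each statement's English description precedes it below -/
import Mathlib

section
/- Let ≈ be an equivalence relation on a family of sets satisfying the Aristotelian Principle (A ≈ B iff A \ B ≈ B \ A). Then for all sets A, A', B, B' with A ∩ B = ∅ and A' ∩ B' = ∅, if A ≈ A' and B ≈ B', then A ∪ B ≈ A' ∪ B'. -/
theorem sum_principle {α : Type*} (r : Set α → Set α → Prop)
    (hequiv : Equivalence r)
    (hAP : ∀ A B : Set α, r A B ↔ r (A \ B) (B \ A)) :
    ∀ A A' B B' : Set α, A ∩ B = ∅ → A' ∩ B' = ∅ →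
      r A A' → r B B' → r (A ∪ B) (A' ∪ B') := by
  -- Lemma: adding a common disjoint piece preserves the relation
  have L1 : ∀ U V W : Set α, U ∩ W = ∅ → V ∩ W = ∅ →
      (r (U ∪ W) (V ∪ W) ↔ r U V) := by
    intro U V W hUW hVW
    have hU : ∀ x, x ∈ U → x ∉ W := fun x hx hw =>
      Set.eq_empty_iff_forall_notMem.mp hUW x ⟨hx, hw⟩
    have hV : ∀ x, x ∈ V → x ∉ W := fun x hx hw =>
      Set.eq_empty_iff_forall_notMem.mp hVW x ⟨hx, hw⟩
    have e1 : (U ∪ W) \ (V ∪ W) = U \ V := by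
      ext x
      simp only [Set.mem_diff, Set.mem_union, not_or]
      constructor
      · rintro ⟨hx | hx, hv, hw⟩
        · exact ⟨hx, hv⟩
        · exact absurd hx hw
      · rintro ⟨hx, hv⟩
        exact ⟨Or.inl hx, hv, hU x hx⟩
    have e2 : (V ∪ W) \ (U ∪ W) = V \ U := by
      ext x
      simp only [Set.mem_diff, Set.mem_union, not_or]
      constructor
      · rintro ⟨hx | hx, hv, hw⟩
        · exact ⟨hx, hv⟩
        · exact absurd hx hw
      · rintro ⟨hx, hv⟩
        exact ⟨Or.inl hx, hv, hV x hx⟩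
    rw [hAP (U ∪ W) (V ∪ W), e1, e2, ← hAP U V]
  intro A A' B B' hAB hA'B' h1 h2
  have hAB' : ∀ x, x ∈ A → x ∈ B → False := fun x ha hb =>
    Set.eq_empty_iff_forall_notMem.mp hAB x ⟨ha, hb⟩
  have hA'B'' : ∀ x, x ∈ A' → x ∈ B' → False := fun x ha hb =>
    Set.eq_empty_iff_forall_notMem.mp hA'B' x ⟨ha, hb⟩
  set p := A ∩ B' with hp
  set P := A \ (A' ∪ B') with hP
  set q := B ∩ A' with hq
  set Q := B \ (A' ∪ B') with hQ
  set a := A' \ (A ∪ B) with ha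
  set b := B' \ (A ∪ B) with hb
  -- decomposition identities
  have d1 : A \ A' = p ∪ P := by
    ext x; simp only [hp, hP, Set.mem_diff, Set.mem_union, Set.mem_inter_iff, not_or]; tauto
  have d2 : A' \ A = q ∪ a := by
    ext x; simp only [hq, ha, Set.mem_diff, Set.mem_union, Set.mem_inter_iff, not_or]; tauto
  have d3 : B \ B' = q ∪ Q := by
    ext x; simp only [hq, hQ, Set.mem_diff, Set.mem_union, Set.mem_inter_iff, not_or]; tauto
  have d4 : B' \ B = p ∪ b := by
    ext x; simp only [hp, hb, Set.mem_diff, Set.mem_union, Set.mem_inter_iff, not_or]; tauto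
  have d5 : (A ∪ B) \ (A' ∪ B') = P ∪ Q := by
    ext x; simp only [hP, hQ, Set.mem_diff, Set.mem_union, not_or]; tauto
  have d6 : (A' ∪ B') \ (A ∪ B) = a ∪ b := by
    ext x; simp only [ha, hb, Set.mem_diff, Set.mem_union, not_or]; tauto
  have h1' : r (p ∪ P) (q ∪ a) := by
    rw [hAP, d1, d2] at h1; exact h1
  have h2' : r (q ∪ Q) (p ∪ b) := by
    rw [hAP, d3, d4] at h2; exact h2
  -- disjointness facts
  have disj : ∀ S T : Set α, (∀ x, x ∈ S → x ∈ T → False) → S ∩ T = ∅ := by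
    intro S T h
    exact Set.eq_empty_iff_forall_notMem.mpr fun x ⟨hs, ht⟩ => h x hs ht
  have c1 : (p ∪ P) ∩ Q = ∅ := by
    apply disj; intro x hx hxQ
    rcases hx with hx | hx
    · exact hAB' x hx.1 hxQ.1
    · exact hAB' x hx.1 hxQ.1
  have c2 : (q ∪ a) ∩ Q = ∅ := by
    apply disj; intro x hx hxQ
    rcases hx with hx | hx
    · exact hxQ.2 (Or.inl hx.2)
    · exact hx.2 (Or.inr hxQ.1)
  have c3 : (q ∪ Q) ∩ a = ∅ := by
    apply disj; intro x hx hxa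
    rcases hx with hx | hx
    · exact hxa.2 (Or.inr hx.1)
    · exact hxa.2 (Or.inr hx.1)
  have c4 : (p ∪ b) ∩ a = ∅ := by
    apply disj; intro x hx hxa
    rcases hx with hx | hx
    · exact hxa.2 (Or.inl hx.1)
    · exact hA'B'' x hxa.1 hx.1
  have c5 : (P ∪ Q) ∩ p = ∅ := by
    apply disj; intro x hx hxp
    rcases hx with hx | hx
    · exact hx.2 (Or.inr hxp.2)
    · exact hAB' x hxp.1 hx.1
  have c6 : (a ∪ b) ∩ p = ∅ := by
    apply disj; intro x hx hxp
    rcases hx with hx | hx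
    · exact hx.2 (Or.inl hxp.1)
    · exact hx.2 (Or.inl hxp.1)
  have s1 : r ((p ∪ P) ∪ Q) ((q ∪ a) ∪ Q) := (L1 _ _ Q c1 c2).mpr h1'
  have s2 : r ((q ∪ Q) ∪ a) ((p ∪ b) ∪ a) := (L1 _ _ a c3 c4).mpr h2'
  have e1 : (q ∪ a) ∪ Q = (q ∪ Q) ∪ a := by
    ext x; simp only [Set.mem_union]; tauto
  have s3 : r ((p ∪ P) ∪ Q) ((p ∪ b) ∪ a) := by
    rw [e1] at s1
    exact hequiv.trans s1 s2
  have e2 : (p ∪ P) ∪ Q = (P ∪ Q) ∪ p := by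
    ext x; simp only [Set.mem_union]; tauto
  have e3 : (p ∪ b) ∪ a = (a ∪ b) ∪ p := by
    ext x; simp only [Set.mem_union]; tauto
  rw [e2, e3] at s3
  have s4 : r (P ∪ Q) (a ∪ b) := (L1 _ _ p c5 c6).mp s3
  rw [hAP (A ∪ B) (A' ∪ B'), d5, d6]
  exact s4
end

section
/- Let ≈ be an equivalence relation on sets satisfying the Aristotelian Principle. Then for all sets A, A', C, C' with A ⊆ C and A' ⊆ C', if A ≈ A' and C ≈ C', then C \ A ≈ C' \ A'. -/
theorem difference_principle {α : Type*} (r : Set α → Set α → Prop)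
    (hequiv : Equivalence r)
    (hAP : ∀ A B : Set α, r A B ↔ r (A \ B) (B \ A)) :
    ∀ A A' C C' : Set α, A ⊆ C → A' ⊆ C' →
      r A A' → r C C' → r (C \ A) (C' \ A') := by
  intro A A' C C' hAC hA'C' hAA' hCC'
  set S : Set α := C \ (A ∪ C') with hS
  set T : Set α := (A ∩ C') \ A' with hT
  set X : Set α := (A' \ A) ∪ S with hX
  set Y : Set α := (A \ A') ∪ S with hY
  set Z : Set α := (C' \ C) ∪ T with hZ
  have e1 : X \ Y = A' \ A := by
    ext x
    have h1 := @hAC x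
    have h2 := @hA'C' x
    simp only [hX, hY, hS, Set.mem_diff, Set.mem_union, Set.mem_inter_iff, not_or, not_and]
    tauto
  have e2 : Y \ X = A \ A' := by
    ext x
    have h1 := @hAC x
    have h2 := @hA'C' x
    simp only [hX, hY, hS, Set.mem_diff, Set.mem_union, Set.mem_inter_iff, not_or, not_and]
    tauto
  have e3 : Y \ Z = C \ C' := by
    ext x
    have h1 := @hAC x
    have h2 := @hA'C' x
    simp only [hY, hZ, hS, hT, Set.mem_diff, Set.mem_union, Set.mem_inter_iff, not_or, not_and]
    tauto
  have e4 : Z \ Y = C' \ C := by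
    ext x
    have h1 := @hAC x
    have h2 := @hA'C' x
    simp only [hY, hZ, hS, hT, Set.mem_diff, Set.mem_union, Set.mem_inter_iff, not_or, not_and]
    tauto
  have e5 : X \ Z = (C \ A) \ (C' \ A') := by
    ext x
    have h1 := @hAC x
    have h2 := @hA'C' x
    simp only [hX, hZ, hS, hT, Set.mem_diff, Set.mem_union, Set.mem_inter_iff, not_or, not_and]
    tauto
  have e6 : Z \ X = (C' \ A') \ (C \ A) := by
    ext x
    have h1 := @hAC x
    have h2 := @hA'C' x
    simp only [hX, hZ, hS, hT, Set.mem_diff, Set.mem_union, Set.mem_inter_iff, not_or, not_and]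
    tauto
  have h3 : r X Y := by
    apply (hAP X Y).2
    rw [e1, e2]
    exact hequiv.symm ((hAP A A').1 hAA')
  have h4 : r Y Z := by
    apply (hAP Y Z).2
    rw [e3, e4]
    exact (hAP C C').1 hCC'
  have h5 : r X Z := hequiv.trans h3 h4
  have h6 := (hAP X Z).1 h5
  rw [e5, e6] at h6
  exact (hAP (C \ A) (C' \ A')).2 h6
end

section
/- Let ≈ be an equivalence relation on sets satisfying AP, and let A, B, A', B' be sets with B ⊆ A and B' ⊆ A'. If B ≈ B', then A \ B ≈ A' \ B' if and only if A ≈ A'. -/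
theorem diff_iff_of_subset {α : Type*} (r : Set α → Set α → Prop)
    (hequiv : Equivalence r)
    (hAP : ∀ A B : Set α, r A B ↔ r (A \ B) (B \ A)) :
    ∀ A B A' B' : Set α, B ⊆ A → B' ⊆ A' → r B B' →
      (r (A \ B) (A' \ B') ↔ r A A') := by
  intro A B A' B' hBA hB'A' hBB'
  -- cancellation lemma
  have cancel : ∀ X Y C : Set α, Disjoint X C → Disjoint Y C →
      (r (X ∪ C) (Y ∪ C) ↔ r X Y) := by
    intro X Y C h1 h2
    have e1 : (X ∪ C) \ (Y ∪ C) = X \ Y := by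
      ext x
      have h1' : x ∈ X → x ∉ C := fun h => Set.disjoint_left.mp h1 h
      have h2' : x ∈ Y → x ∉ C := fun h => Set.disjoint_left.mp h2 h
      simp only [Set.mem_diff, Set.mem_union]
      tauto
    have e2 : (Y ∪ C) \ (X ∪ C) = Y \ X := by
      ext x
      have h1' : x ∈ X → x ∉ C := fun h => Set.disjoint_left.mp h1 h
      have h2' : x ∈ Y → x ∉ C := fun h => Set.disjoint_left.mp h2 h
      simp only [Set.mem_diff, Set.mem_union]
      tauto
    rw [hAP (X ∪ C) (Y ∪ C), e1, e2, ← hAP X Y]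
  -- atoms
  set p := A ∩ Bᶜ ∩ A'ᶜ with hp
  set q := A ∩ Bᶜ ∩ B' with hq
  set t := B ∩ A'ᶜ with ht
  set p' := A' ∩ B'ᶜ ∩ Aᶜ with hp'
  set q' := A' ∩ B'ᶜ ∩ B with hq'
  set t' := B' ∩ Aᶜ with ht'
  have eA : A \ A' = p ∪ t := by
    ext x; have h1 := @hBA x; have h2 := @hB'A' x
    simp only [hp, ht, Set.mem_diff, Set.mem_union, Set.mem_inter_iff, Set.mem_compl_iff]; tauto
  have eA' : A' \ A = p' ∪ t' := by
    ext x; have h1 := @hBA x; have h2 := @hB'A' x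
    simp only [hp', ht', Set.mem_diff, Set.mem_union, Set.mem_inter_iff, Set.mem_compl_iff]; tauto
  have eB : B \ B' = q' ∪ t := by
    ext x; have h1 := @hBA x; have h2 := @hB'A' x
    simp only [hq', ht, Set.mem_diff, Set.mem_union, Set.mem_inter_iff, Set.mem_compl_iff]; tauto
  have eB' : B' \ B = q ∪ t' := by
    ext x; have h1 := @hBA x; have h2 := @hB'A' x
    simp only [hq, ht', Set.mem_diff, Set.mem_union, Set.mem_inter_iff, Set.mem_compl_iff]; tauto
  have eD : (A \ B) \ (A' \ B') = p ∪ q := by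
    ext x; have h1 := @hBA x; have h2 := @hB'A' x
    simp only [hp, hq, Set.mem_diff, Set.mem_union, Set.mem_inter_iff, Set.mem_compl_iff]; tauto
  have eE : (A' \ B') \ (A \ B) = p' ∪ q' := by
    ext x; have h1 := @hBA x; have h2 := @hB'A' x
    simp only [hp', hq', Set.mem_diff, Set.mem_union, Set.mem_inter_iff, Set.mem_compl_iff]; tauto
  -- disjointness facts
  have dis : ∀ X Y : Set α, (∀ x, x ∈ X → x ∈ Y → False) → Disjoint X Y := by
    intro X Y h; exact Set.disjoint_left.mpr fun {x} hx hy => h x hx hy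
  have d1 : Disjoint (p ∪ t) q := by
    apply dis; intro x hx hy
    have h2 := @hB'A' x
    simp only [hp, hq, ht, Set.mem_union, Set.mem_inter_iff, Set.mem_compl_iff] at hx hy; tauto
  have d2 : Disjoint (p' ∪ t') q := by
    apply dis; intro x hx hy
    simp only [hp', hq, ht', Set.mem_union, Set.mem_inter_iff, Set.mem_compl_iff] at hx hy; tauto
  have d3 : Disjoint (q ∪ t') p' := by
    apply dis; intro x hx hy
    simp only [hp', hq, ht', Set.mem_union, Set.mem_inter_iff, Set.mem_compl_iff] at hx hy; tauto
  have d4 : Disjoint (q' ∪ t) p' := by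
    apply dis; intro x hx hy
    have h1 := @hBA x
    simp only [hp', hq', ht, Set.mem_union, Set.mem_inter_iff, Set.mem_compl_iff] at hx hy; tauto
  have d5 : Disjoint (p ∪ q) t := by
    apply dis; intro x hx hy
    have h2 := @hB'A' x
    simp only [hp, hq, ht, Set.mem_union, Set.mem_inter_iff, Set.mem_compl_iff] at hx hy; tauto
  have d6 : Disjoint (p' ∪ q') t := by
    apply dis; intro x hx hy
    simp only [hp', hq', ht, Set.mem_union, Set.mem_inter_iff, Set.mem_compl_iff] at hx hy; tauto
  -- fact from r B B'
  have fact2 : r (q' ∪ t) (q ∪ t') := by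
    have := (hAP B B').mp hBB'
    rwa [eB, eB'] at this
  have hmid : r ((q ∪ t') ∪ p') ((q' ∪ t) ∪ p') :=
    (cancel _ _ p' d3 d4).mpr (hequiv.symm fact2)
  have hmid' : r ((p' ∪ t') ∪ q) ((p' ∪ q') ∪ t) := by
    have e1 : (q ∪ t') ∪ p' = (p' ∪ t') ∪ q := by ext x; simp only [Set.mem_union]; tauto
    have e2 : (q' ∪ t) ∪ p' = (p' ∪ q') ∪ t := by ext x; simp only [Set.mem_union]; tauto
    rwa [e1, e2] at hmid
  -- the chain
  have chain : r A A' ↔ r (p ∪ q) (p' ∪ q') := by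
    rw [hAP A A', eA, eA', ← cancel (p ∪ t) (p' ∪ t') q d1 d2]
    constructor
    · intro h
      have h2 : r ((p ∪ t) ∪ q) ((p' ∪ q') ∪ t) := hequiv.trans h hmid'
      have e3 : (p ∪ t) ∪ q = (p ∪ q) ∪ t := by ext x; simp only [Set.mem_union]; tauto
      rw [e3] at h2
      exact (cancel _ _ t d5 d6).mp h2
    · intro h
      have h2 : r ((p ∪ q) ∪ t) ((p' ∪ q') ∪ t) := (cancel _ _ t d5 d6).mpr h
      have h3 : r ((p ∪ q) ∪ t) ((p' ∪ t') ∪ q) := hequiv.trans h2 (hequiv.symm hmid')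
      have e3 : (p ∪ q) ∪ t = (p ∪ t) ∪ q := by ext x; simp only [Set.mem_union]; tauto
      rwa [e3] at h3
  rw [hAP (A \ B) (A' \ B'), eD, eE, chain]
end

section
/- Let ≈ be an equivalence relation on sets. If ≈ satisfies both the Sum Principle (disjoint unions of equinumerous pieces are equinumerous) and the Difference Principle (differences of equinumerous pairs with equinumerous subsets are equinumerous), then ≈ satisfies the Aristotelian Principle: A ≈ B iff A \ B ≈ B \ A. -/
theorem sp_dp_implies_ap {α : Type*} (r : Set α → Set α → Prop)
    (hequiv : Equivalence r)
    (hSP : ∀ A A' B B' : Set α, A ∩ B = ∅ → A' ∩ B' = ∅ →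
      r A A' → r B B' → r (A ∪ B) (A' ∪ B'))
    (hDP : ∀ A A' C C' : Set α, A ⊆ C → A' ⊆ C' →
      r A A' → r C C' → r (C \ A) (C' \ A')) :
    ∀ A B : Set α, r A B ↔ r (A \ B) (B \ A) := by
  intro A B
  constructor
  · intro h
    have := hDP (A ∩ B) (A ∩ B) A B Set.inter_subset_left
      Set.inter_subset_right (hequiv.refl _) h
    simpa [Set.diff_self_inter, Set.diff_inter_self_eq_diff] using this
  · intro h
    have hd1 : (A \ B) ∩ (A ∩ B) = ∅ := by
      ext x; simp; tauto
    have hd2 : (B \ A) ∩ (A ∩ B) = ∅ := by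
      ext x; simp; tauto
    have := hSP (A \ B) (B \ A) (A ∩ B) (A ∩ B) hd1 hd2 h (hequiv.refl _)
    have e1 : (A \ B) ∪ (A ∩ B) = A := Set.diff_union_inter A B
    have e2 : (B \ A) ∪ (A ∩ B) = B := by
      rw [Set.inter_comm]; exact Set.diff_union_inter B A
    rwa [e1, e2] at this
end

section
/- Let ≈ be an equinumerosity relation in which any two singletons are equinumerous. Then two finite sets A and B satisfy A ≈ B if and only if they have the same cardinality; moreover every infinite set is strictly greater (in the sense of ≺) than every finite set. -/
/-!
By AP, adding a common fresh point to both sides preserves `≈`, and swapping one fresh point for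
another reduces to two singletons being equinumerous; so induction on the size shows that finite sets
of the same size are equinumerous. Hence a finite set is `≈` to a subset of any finite or infinite set
of larger size, and that subset is proper. A proper subset is `≺` its superset, so by ZP it cannot
also be `≈` to it, which rules out `A ≈ B` for finite sets of different sizes.
-/

/-- `A ≺ B` : there are `A' ⊂ B'` with `A ≈ A'` and `B ≈ B'`. -/
def SetPrec {α : Type*} (r : Set α → Set α → Prop) (A B : Set α) : Prop :=
  ∃ A' B' : Set α, A' ⊂ B' ∧ r A A' ∧ r B B'

section

variable {α : Type*} {r : Set α → Set α → Prop}

theorem setPrec_of_ssubset (hrefl : ∀ A, r A A) {A B : Set α} (h : A ⊂ B) : SetPrec r A B :=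
  ⟨A, B, h, hrefl A, hrefl B⟩

theorem not_rel_of_ssubset (hrefl : ∀ A, r A A) (hexcl : ∀ A B, r A B → ¬ SetPrec r A B)
    {A B : Set α} (h : A ⊂ B) : ¬ r A B :=
  fun hAB => hexcl A B hAB (setPrec_of_ssubset hrefl h)

theorem rel_insert_insert_iff (hAP : ∀ A B : Set α, r A B ↔ r (A \ B) (B \ A))
    {A B : Set α} {a : α} (hA : a ∉ A) (hB : a ∉ B) :
    r (insert a A) (insert a B) ↔ r A B := by
  rw [hAP, hAP A B, Set.insert_sdiff_of_mem _ (Set.mem_insert a B),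
    Set.insert_sdiff_of_mem _ (Set.mem_insert a A), Set.sdiff_insert_of_notMem hA,
    Set.sdiff_insert_of_notMem hB]

theorem rel_insert_insert (hrefl : ∀ A, r A A) (hAP : ∀ A B : Set α, r A B ↔ r (A \ B) (B \ A))
    (hsingle : ∀ a b : α, r {a} {b}) {C : Set α} {a b : α} (ha : a ∉ C) (hb : b ∉ C) :
    r (insert a C) (insert b C) := by
  obtain rfl | hab := eq_or_ne a b
  · exact hrefl _
  have hdiff : ∀ {x y : α}, x ∉ C → x ≠ y → insert x C \ insert y C = {x} := by
    intro x y hx hxy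
    rw [Set.insert_sdiff_of_notMem C (by simp [hxy, hx]),
      Set.sdiff_eq_empty.2 (Set.subset_insert y C), insert_empty_eq]
  rw [hAP, hdiff ha hab, hdiff hb hab.symm]
  exact hsingle a b

theorem rel_of_ncard_eq (hequiv : Equivalence r) (hAP : ∀ A B : Set α, r A B ↔ r (A \ B) (B \ A))
    (hsingle : ∀ a b : α, r {a} {b}) {A : Set α} (hA : A.Finite) :
    ∀ {B : Set α}, B.Finite → A.ncard = B.ncard → r A B := by
  induction A, hA using Set.Finite.induction_on with
  | empty =>
    intro B hB hcard
    rw [(Set.ncard_eq_zero hB).1 (by simpa using hcard.symm)]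
    exact hequiv.refl _
  | @insert a A haA hA ih =>
    intro B hB hcard
    rw [Set.ncard_insert_of_notMem haA hA] at hcard
    -- take `b := a` when possible, so that `a` stays fresh for `B \ {b}`
    obtain ⟨b, hbB, hba⟩ : ∃ b ∈ B, a ∈ B → b = a := by
      by_cases haB : a ∈ B
      · exact ⟨a, haB, fun _ => rfl⟩
      · obtain ⟨b, hbB⟩ := Set.nonempty_of_ncard_ne_zero (by omega : B.ncard ≠ 0)
        exact ⟨b, hbB, fun h => absurd h haB⟩
    have haB' : a ∉ B \ {b} := fun h => h.2 (hba h.1).symm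
    have hbB' : b ∉ B \ {b} := fun h => h.2 rfl
    have hAB' : r A (B \ {b}) :=
      ih hB.sdiff (by rw [Set.ncard_sdiff_singleton_of_mem hbB]; omega)
    have hswap := rel_insert_insert hequiv.refl hAP hsingle haB' hbB'
    rw [Set.insert_sdiff_singleton, Set.insert_eq_of_mem hbB] at hswap
    exact hequiv.trans ((rel_insert_insert_iff hAP haA haB').2 hAB') hswap

theorem not_rel_of_ncard_lt (hequiv : Equivalence r)
    (hAP : ∀ A B : Set α, r A B ↔ r (A \ B) (B \ A)) (hsingle : ∀ a b : α, r {a} {b})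
    (hexcl : ∀ A B, r A B → ¬ SetPrec r A B) {A B : Set α} (hA : A.Finite) (hB : B.Finite)
    (h : A.ncard < B.ncard) : ¬ r A B := by
  obtain ⟨B₀, hB₀B, hB₀⟩ := Set.exists_subset_card_eq h.le
  have hAB₀ : r A B₀ := rel_of_ncard_eq hequiv hAP hsingle hA (hB.subset hB₀B) hB₀.symm
  have hss : B₀ ⊂ B := hB₀B.ssubset_of_ne (by rintro rfl; omega)
  exact fun hAB => not_rel_of_ssubset hequiv.refl hexcl hss (hequiv.trans (hequiv.symm hAB₀) hAB)

theorem rel_iff_ncard_eq (hequiv : Equivalence r)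
    (hAP : ∀ A B : Set α, r A B ↔ r (A \ B) (B \ A)) (hsingle : ∀ a b : α, r {a} {b})
    (hexcl : ∀ A B, r A B → ¬ SetPrec r A B) {A B : Set α} (hA : A.Finite) (hB : B.Finite) :
    r A B ↔ A.ncard = B.ncard := by
  refine ⟨fun hAB => ?_, rel_of_ncard_eq hequiv hAP hsingle hA hB⟩
  by_contra hne
  rcases Nat.lt_or_gt_of_ne hne with h | h
  · exact not_rel_of_ncard_lt hequiv hAP hsingle hexcl hA hB h hAB
  · exact not_rel_of_ncard_lt hequiv hAP hsingle hexcl hB hA h (hequiv.symm hAB)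

theorem setPrec_of_finite_of_infinite (hequiv : Equivalence r)
    (hAP : ∀ A B : Set α, r A B ↔ r (A \ B) (B \ A)) (hsingle : ∀ a b : α, r {a} {b})
    {A X : Set α} (hA : A.Finite) (hX : X.Infinite) : SetPrec r A X := by
  obtain ⟨X₀, hX₀X, hX₀, hcard⟩ := hX.exists_subset_ncard_eq A.ncard
  exact ⟨X₀, X, hX₀X.ssubset_of_ne (by rintro rfl; exact hX hX₀),
    rel_of_ncard_eq hequiv hAP hsingle hA hX₀ hcard.symm, hequiv.refl X⟩

end

theorem finite_equinumerosity_general {α : Type*}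
    (r : Set α → Set α → Prop)
    (hequiv : Equivalence r)
    (hAP : ∀ A B : Set α, r A B ↔ r (A \ B) (B \ A))
    (hZP : ∀ A B : Set α,
      (r A B ∧ ¬ SetPrec r A B ∧ ¬ SetPrec r B A) ∨
      (¬ r A B ∧ SetPrec r A B ∧ ¬ SetPrec r B A) ∨
      (¬ r A B ∧ ¬ SetPrec r A B ∧ SetPrec r B A))
    (hsingle : ∀ a b : α, r {a} {b}) :
    (∀ A B : Set α, A.Finite → B.Finite → (r A B ↔ A.ncard = B.ncard)) ∧
    (∀ A X : Set α, A.Finite → X.Infinite → SetPrec r A X) := by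
  have hexcl : ∀ A B, r A B → ¬ SetPrec r A B := fun A B hAB hprec => by
    rcases hZP A B with ⟨-, h, -⟩ | ⟨h, -⟩ | ⟨h, -⟩ <;> contradiction
  exact ⟨fun A B hA hB => rel_iff_ncard_eq hequiv hAP hsingle hexcl hA hB,
    fun A X hA hX => setPrec_of_finite_of_infinite hequiv hAP hsingle hA hX⟩

theorem finite_equinumerosity {α : Type*} [Infinite α]
    (r : Set α → Set α → Prop)
    (hequiv : Equivalence r)
    (hAP : ∀ A B : Set α, r A B ↔ r (A \ B) (B \ A))
    (hZP : ∀ A B : Set α,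
      (r A B ∧ ¬ SetPrec r A B ∧ ¬ SetPrec r B A) ∨
      (¬ r A B ∧ SetPrec r A B ∧ ¬ SetPrec r B A) ∨
      (¬ r A B ∧ ¬ SetPrec r A B ∧ SetPrec r B A))
    (hsingle : ∀ a b : α, r {a} {b}) :
    (∀ A B : Set α, A.Finite → B.Finite → (r A B ↔ A.ncard = B.ncard)) ∧
    (∀ A X : Set α, A.Finite → X.Infinite → SetPrec r A X) :=
  finite_equinumerosity_general r hequiv hAP hZP hsingle
end

section
/- Let ≈ be an equinumerosity relation and suppose C ≈ {b} for some singleton {b}. Then C is a singleton. -/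
theorem equinumerous_singleton {α : Type*} (r : Set α → Set α → Prop)
    (hequiv : Equivalence r)
    (hAP : ∀ A B : Set α, r A B ↔ r (A \ B) (B \ A))
    (hZP : ∀ A B : Set α,
      (r A B ∧ ¬ SetPrec r A B ∧ ¬ SetPrec r B A) ∨
      (¬ r A B ∧ SetPrec r A B ∧ ¬ SetPrec r B A) ∨
      (¬ r A B ∧ ¬ SetPrec r A B ∧ SetPrec r B A))
    (hsingle : ∀ a b : α, r {a} {b}) :
    ∀ (C : Set α) (b : α), r C {b} → ∃ c : α, C = {c} := by
  intro C b hCb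
  -- C is nonempty
  have hne : C.Nonempty := by
    by_contra h
    rw [Set.not_nonempty_iff_eq_empty] at h
    subst h
    have hprec : SetPrec r (∅ : Set α) {b} :=
      ⟨∅, {b}, Set.empty_ssubset.2 (Set.singleton_nonempty b),
        hequiv.refl _, hequiv.refl _⟩
    rcases hZP (∅ : Set α) {b} with ⟨_, h2, _⟩ | ⟨h1, _, _⟩ | ⟨_, h2, _⟩
    · exact h2 hprec
    · exact h1 hCb
    · exact h2 hprec
  obtain ⟨c, hc⟩ := hne
  refine ⟨c, ?_⟩
  by_contra hCc
  -- {c} is a proper subset of C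
  have hss : ({c} : Set α) ⊂ C := by
    constructor
    · exact Set.singleton_subset_iff.2 hc
    · intro hsub
      exact hCc (le_antisymm (fun x hx => hsub hx) (Set.singleton_subset_iff.2 hc))
  have hprec : SetPrec r ({c} : Set α) C := ⟨{c}, C, hss, hequiv.refl _, hequiv.refl _⟩
  have hrcC : r C ({c} : Set α) :=
    hequiv.trans hCb (hequiv.symm (hsingle c b))
  rcases hZP ({c} : Set α) C with ⟨_, h2, _⟩ | ⟨h1, _, _⟩ | ⟨_, h2, _⟩
  · exact h2 hprec
  · exact h1 (hequiv.symm hrcC)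
  · exact h2 hprec
end

section
/- Let R be a commutative ring with a positive cone R⁺ (closed under addition and multiplication, 0 ∉ R⁺, and R = R⁺ ∪ {0} ∪ (−R⁺) need not hold), and let I be a gauge ideal (I ∩ R⁺ = ∅, and for every S ∉ I there is P ∈ R⁺ with S + P ∈ I or S − P ∈ I). Then the quotient R/I is a linearly ordered ring where the positive elements are exactly the cosets P + I with P ∈ R⁺. -/
/-!
Write `x < y` in `R ⧸ I` when `y - x` is the class of an element of the cone `R⁺`.
Closure of `R⁺` under addition and multiplication gives transitivity and the compatibility with
`+` and `*`, disjointness of `R⁺` from `I` gives irreflexivity, and the gauge condition, applied to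
a difference `T - S ∉ I`, gives trichotomy.
-/

namespace Ideal.Quotient

variable {R : Type*} [CommRing R] {I : Ideal R} {Rp : Set R}

variable (I Rp) in
def ConeLT (x y : R ⧸ I) : Prop := ∃ P ∈ Rp, y = x + mk I P

theorem zero_coneLT_iff {x : R ⧸ I} : ConeLT I Rp 0 x ↔ ∃ P ∈ Rp, x = mk I P := by
  simp only [ConeLT, zero_add]

theorem coneLT_irrefl (hdisj : ∀ x ∈ Rp, x ∉ I) (x : R ⧸ I) : ¬ ConeLT I Rp x x := by
  rintro ⟨P, hP, hx⟩
  exact hdisj P hP (eq_zero_iff_mem.mp (left_eq_add.mp hx))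

theorem coneLT_trans (hadd : ∀ x ∈ Rp, ∀ y ∈ Rp, x + y ∈ Rp) {x y z : R ⧸ I} :
    ConeLT I Rp x y → ConeLT I Rp y z → ConeLT I Rp x z := by
  rintro ⟨P, hP, rfl⟩ ⟨Q, hQ, rfl⟩
  exact ⟨P + Q, hadd P hP Q hQ, by rw [map_add, add_assoc]⟩

theorem coneLT_trichotomous (hgauge : ∀ S : R, S ∉ I → ∃ P ∈ Rp, S + P ∈ I ∨ S - P ∈ I)
    (x y : R ⧸ I) : ConeLT I Rp x y ∨ x = y ∨ ConeLT I Rp y x := by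
  obtain ⟨S, rfl⟩ := mk_surjective x
  obtain ⟨T, rfl⟩ := mk_surjective y
  by_cases hTS : T - S ∈ I
  · exact Or.inr (Or.inl (Ideal.Quotient.eq.mpr (by simpa using neg_mem hTS)))
  obtain ⟨P, hP, hplus | hminus⟩ := hgauge (T - S) hTS
  · refine Or.inr (Or.inr ⟨P, hP, ?_⟩)
    rw [← map_add, Ideal.Quotient.eq, show S - (T + P) = -(T - S + P) by ring]
    exact neg_mem hplus
  · refine Or.inl ⟨P, hP, ?_⟩
    rw [← map_add, Ideal.Quotient.eq, show T - (S + P) = T - S - P by ring]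
    exact hminus

theorem isStrictTotalOrder_coneLT (hadd : ∀ x ∈ Rp, ∀ y ∈ Rp, x + y ∈ Rp)
    (hdisj : ∀ x ∈ Rp, x ∉ I) (hgauge : ∀ S : R, S ∉ I → ∃ P ∈ Rp, S + P ∈ I ∨ S - P ∈ I) :
    IsStrictTotalOrder (R ⧸ I) (ConeLT I Rp) where
  irrefl := coneLT_irrefl hdisj
  trans _ _ _ := coneLT_trans hadd
  trichotomous x y hxy hyx := ((coneLT_trichotomous hgauge x y).resolve_left hxy).resolve_right hyx

theorem ConeLT.add_right {x y : R ⧸ I} (h : ConeLT I Rp x y) (z : R ⧸ I) :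
    ConeLT I Rp (x + z) (y + z) := by
  obtain ⟨P, hP, rfl⟩ := h
  exact ⟨P, hP, add_right_comm x _ z⟩

theorem ConeLT.mul_pos (hmul : ∀ x ∈ Rp, ∀ y ∈ Rp, x * y ∈ Rp) {x y : R ⧸ I}
    (hx : ConeLT I Rp 0 x) (hy : ConeLT I Rp 0 y) : ConeLT I Rp 0 (x * y) := by
  obtain ⟨P, hP, rfl⟩ := zero_coneLT_iff.mp hx
  obtain ⟨Q, hQ, rfl⟩ := zero_coneLT_iff.mp hy
  exact zero_coneLT_iff.mpr ⟨P * Q, hmul P hP Q hQ, (map_mul _ P Q).symm⟩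

end Ideal.Quotient

theorem gauge_quotient_ordered_ring_general {R : Type*} [CommRing R]
    (Rp : Set R)
    (hadd : ∀ x ∈ Rp, ∀ y ∈ Rp, x + y ∈ Rp)
    (hmul : ∀ x ∈ Rp, ∀ y ∈ Rp, x * y ∈ Rp)
    (I : Ideal R)
    (hdisj : ∀ x ∈ Rp, x ∉ I)
    (hgauge : ∀ S : R, S ∉ I → ∃ P ∈ Rp, S + P ∈ I ∨ S - P ∈ I) :
    ∃ lt : (R ⧸ I) → (R ⧸ I) → Prop,
      (∀ x y : R ⧸ I, lt x y ↔ ∃ P ∈ Rp, y = x + Ideal.Quotient.mk I P) ∧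
      IsStrictTotalOrder (R ⧸ I) lt ∧
      (∀ x y z : R ⧸ I, lt x y → lt (x + z) (y + z)) ∧
      (∀ x y : R ⧸ I, lt 0 x → lt 0 y → lt 0 (x * y)) ∧
      (∀ x : R ⧸ I, lt 0 x ↔ ∃ P ∈ Rp, x = Ideal.Quotient.mk I P) :=
  ⟨Ideal.Quotient.ConeLT I Rp, fun _ _ => Iff.rfl,
    Ideal.Quotient.isStrictTotalOrder_coneLT hadd hdisj hgauge,
    fun _ _ z h => h.add_right z, fun _ _ => Ideal.Quotient.ConeLT.mul_pos hmul,
    fun _ => Ideal.Quotient.zero_coneLT_iff⟩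

theorem gauge_quotient_ordered_ring {R : Type*} [CommRing R]
    (Rp : Set R)
    (hadd : ∀ x ∈ Rp, ∀ y ∈ Rp, x + y ∈ Rp)
    (hmul : ∀ x ∈ Rp, ∀ y ∈ Rp, x * y ∈ Rp)
    (h0 : (0 : R) ∉ Rp)
    (I : Ideal R)
    (hdisj : ∀ x ∈ Rp, x ∉ I)
    (hgauge : ∀ S : R, S ∉ I → ∃ P ∈ Rp, S + P ∈ I ∨ S - P ∈ I) :
    ∃ lt : (R ⧸ I) → (R ⧸ I) → Prop,
      (∀ x y : R ⧸ I, lt x y ↔ ∃ P ∈ Rp, y = x + Ideal.Quotient.mk I P) ∧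
      IsStrictTotalOrder (R ⧸ I) lt ∧
      (∀ x y z : R ⧸ I, lt x y → lt (x + z) (y + z)) ∧
      (∀ x y : R ⧸ I, lt 0 x → lt 0 y → lt 0 (x * y)) ∧
      (∀ x : R ⧸ I, lt 0 x ↔ ∃ P ∈ Rp, x = Ideal.Quotient.mk I P) :=
  gauge_quotient_ordered_ring_general Rp hadd hmul I hdisj hgauge
end

section
/- Let Φ : R → ℤ^L be the map sending a formal series S = Σ_a n_a t^a (over finitely supported exponent functions a : ℕ → ℕ) to the family ⟨S(x_F)⟩ indexed by finite sets F ⊆ ℕ, where x_F is the 0-1 assignment with value 1 exactly on F. Then S lies in the kernel of Φ if and only if for every finite F ⊆ ℕ, the sum Σ_{supp(a) = F} n_a equals 0 (i.e., the associated squarefree series is zero). -/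
theorem kernel_iff_squarefree_zero (n : (ℕ →₀ ℕ) → ℤ)
    (hfin : ∀ F : Finset ℕ, {a : ℕ →₀ ℕ | a.support ⊆ F ∧ n a ≠ 0}.Finite) :
    (∀ F : Finset ℕ, ∑ᶠ a ∈ {a : ℕ →₀ ℕ | a.support ⊆ F}, n a = 0) ↔
    (∀ F : Finset ℕ, ∑ᶠ a ∈ {a : ℕ →₀ ℕ | a.support = F}, n a = 0) := by
  classical
  -- finset sums representing each finsum
  have hTfin : ∀ G : Finset ℕ, {a : ℕ →₀ ℕ | a.support = G ∧ n a ≠ 0}.Finite := by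
    intro G
    exact (hfin G).subset (fun a ha => ⟨by rw [ha.1], ha.2⟩)
  have hT : ∀ G : Finset ℕ, ∑ᶠ a ∈ {a : ℕ →₀ ℕ | a.support = G}, n a
      = ∑ a ∈ (hTfin G).toFinset, n a := by
    intro G
    apply finsum_mem_eq_sum_of_inter_support_eq
    ext a
    simp [Function.mem_support, and_comm]
  have hS : ∀ F : Finset ℕ, ∑ᶠ a ∈ {a : ℕ →₀ ℕ | a.support ⊆ F}, n a
      = ∑ a ∈ (hfin F).toFinset, n a := by
    intro F
    apply finsum_mem_eq_sum_of_inter_support_eq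
    ext a
    simp [Function.mem_support, and_comm]
  -- decomposition: S F = ∑ G ⊆ F, T G
  have key : ∀ F : Finset ℕ, ∑ᶠ a ∈ {a : ℕ →₀ ℕ | a.support ⊆ F}, n a
      = ∑ G ∈ F.powerset, ∑ᶠ a ∈ {a : ℕ →₀ ℕ | a.support = G}, n a := by
    intro F
    rw [hS F, ← Finset.sum_fiberwise_of_maps_to
      (g := fun a : ℕ →₀ ℕ => a.support) (t := F.powerset)
      (fun a ha => by simp only [Set.Finite.mem_toFinset, Set.mem_setOf_eq] at ha
                      exact Finset.mem_powerset.2 ha.1)]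
    refine Finset.sum_congr rfl fun G hG => ?_
    rw [hT G]
    apply Finset.sum_congr _ (fun _ _ => rfl)
    ext a
    simp only [Set.Finite.mem_toFinset, Set.mem_setOf_eq, Finset.mem_filter]
    have hGF := Finset.mem_powerset.1 hG
    constructor
    · rintro ⟨⟨_, h2⟩, h1⟩
      exact ⟨h1, h2⟩
    · rintro ⟨h1, h2⟩
      subst h1
      exact ⟨⟨hGF, h2⟩, rfl⟩
  constructor
  · intro h F
    induction F using Finset.strongInduction with
    | _ F ih =>
      have := key F
      rw [h F] at this
      rw [← Finset.add_sum_erase _ _ (Finset.mem_powerset_self F)] at this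
      have hz : ∑ G ∈ (F.powerset.erase F), ∑ᶠ a ∈ {a : ℕ →₀ ℕ | a.support = G}, n a = 0 := by
        apply Finset.sum_eq_zero
        intro G hG
        obtain ⟨hne, hsub⟩ := Finset.mem_erase.1 hG
        exact ih G (lt_of_le_of_ne (Finset.mem_powerset.1 hsub) hne)
      rw [hz, add_zero] at this
      linarith
  · intro h F
    rw [key F]
    exact Finset.sum_eq_zero fun G _ => h G
end

section
/- Let U be a Ramsey (selective) ultrafilter on the set of finite subsets of ℕ that is fine (every cone C_n = {F : n ∈ F} belongs to U). Then U contains a chain, i.e., a set H ∈ U that is linearly ordered by inclusion. -/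
theorem ramsey_fine_contains_chain (U : Ultrafilter (Finset ℕ))
    (hRamsey : ∀ c : Finset ℕ → Finset ℕ → Bool,
      (∀ F G, c F G = c G F) →
      ∃ H ∈ U, ∃ b : Bool, ∀ F ∈ H, ∀ G ∈ H, F ≠ G → c F G = b)
    (hfine : ∀ n : ℕ, {F : Finset ℕ | n ∈ F} ∈ U) :
    ∃ H ∈ U, ∀ F ∈ H, ∀ G ∈ H, F ⊆ G ∨ G ⊆ F := by
  obtain ⟨H, hH, b, hb⟩ := hRamsey (fun F G => decide (F ⊆ G ∨ G ⊆ F))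
    (fun F G => by simp [or_comm])
  cases b with
  | true =>
    refine ⟨H, hH, fun F hF G hG => ?_⟩
    rcases eq_or_ne F G with rfl | hne
    · exact Or.inl (subset_refl F)
    · have := hb F hF G hG hne
      simpa using this
  | false =>
    exfalso
    -- pick F ∈ H
    have hne : H.Nonempty := Ultrafilter.nonempty_of_mem hH
    obtain ⟨F, hF⟩ := hne
    -- consider the set of G containing all elements of insert m F, where m ∉ F
    set m := (F.sup id) + 1 with hm
    have hmF : m ∉ F := by
      intro h
      have h2 : m ≤ F.sup id := Finset.le_sup (f := id) h
      omega
    have hsub : {G : Finset ℕ | ∀ n ∈ insert m F, n ∈ G} ∈ U := by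
      have : {G : Finset ℕ | ∀ n ∈ insert m F, n ∈ G}
          = ⋂ n ∈ ((insert m F : Finset ℕ) : Set ℕ), {G : Finset ℕ | n ∈ G} := by
        ext G; simp
      rw [this]
      exact (Filter.biInter_finset_mem (insert m F)).2 (fun n _ => hfine n)
    have hmem : (H ∩ {G : Finset ℕ | ∀ n ∈ insert m F, n ∈ G}).Nonempty :=
      Ultrafilter.nonempty_of_mem (U.inter_sets hH hsub)
    obtain ⟨G, hGH, hG⟩ := hmem
    have hFG : F ⊆ G := fun n hn => hG n (Finset.mem_insert_of_mem hn)
    have hne : F ≠ G := by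
      intro h
      exact hmF (h ▸ hG m (Finset.mem_insert_self m F))
    have := hb F hF G hGH hne
    simp at this
    exact this.1 hFG
end
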